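/- Let Ĥ be the graph whose vertices are the pairs (i, j) with i ∈ {1,2,3}, j ∈ {1,2,3,4}, excluding (1,1), (2,2), (3,3), where (i₁, j₁) is adjacent to (i₂, j₂) if and only if i₁ ≠ i₂ and j₁ ≠ j₂, and let β̂ be the proper 4-coloring of Ĥ assigning to each vertex (i, j) the color j. Then every proper 4-coloring of Ĥ that is Kempe-4-equivalent to β̂ has the same color classes as β̂ up to a permutation of the colors. -/

import Mathlib

open SimpleGraph

/-- The spanning subgraph of `G` consisting of the edges both of whose endpoints
receive color `i` or color `j` under `φ`. -/
def kempeSubgraph {V : Type*} (G : SimpleGraph V) {k : ℕ} (φ : V → Fin k) (i j : Fin k) :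
    SimpleGraph V where
  Adj u v := G.Adj u v ∧ (φ u = i ∨ φ u = j) ∧ (φ v = i ∨ φ v = j)
  symm := ⟨fun u v ⟨h, hu, hv⟩ => ⟨h.symm, hv, hu⟩⟩
  loopless := ⟨fun v h => G.loopless.irrefl v h.1⟩

/-- `ψ` is obtained from `φ` by a single `i,j`-Kempe swap:  the colors `i` and `j` are
interchanged on the connected component (of the subgraph induced by colors `i,j`)
containing `w`, and nothing else changes. -/
def IsKempeSwap {V : Type*} (G : SimpleGraph V) {k : ℕ}
    (φ ψ : G.Coloring (Fin k)) : Prop :=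
  ∃ (i j : Fin k) (w : V), ∀ v : V,
    ((kempeSubgraph G (fun x => φ x) i j).Reachable w v → ψ v = Equiv.swap i j (φ v)) ∧
    (¬ (kempeSubgraph G (fun x => φ x) i j).Reachable w v → ψ v = φ v)

/-- Kempe `k`-equivalence of proper `k`-colorings:  one can be transformed into the
other by a sequence of Kempe swaps. -/
def KempeEquiv {V : Type*} (G : SimpleGraph V) (k : ℕ)
    (φ ψ : G.Coloring (Fin k)) : Prop :=
  Relation.EqvGen (IsKempeSwap G) φ ψ

/-- `Kc G k` is the number of Kempe equivalence classes of proper `k`-colorings of `G`. -/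
noncomputable def Kc {V : Type*} (G : SimpleGraph V) (k : ℕ) : ℕ :=
  Nat.card (Quot (KempeEquiv G k))

/-- `G` can be obtained from a bipartite graph by adding `ℓ` edges. -/
def BipartitePlus {V : Type*} (G : SimpleGraph V) (ℓ : ℕ) : Prop :=
  ∃ E : Finset (Sym2 V), E.card = ℓ ∧ ↑E ⊆ G.edgeSet ∧
    (G.deleteEdges ↑E).Colorable 2

/-- `K₃ × K₄`: the categorical (tensor) product of complete graphs, on
`Fin 3 × Fin 4`, where `(i₁,j₁)` is adjacent to `(i₂,j₂)` iff `i₁ ≠ i₂` and `j₁ ≠ j₂`. -/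
def Htensor : SimpleGraph (Fin 3 × Fin 4) where
  Adj p q := p.1 ≠ q.1 ∧ p.2 ≠ q.2
  symm := ⟨fun p q h => ⟨h.1.symm, h.2.symm⟩⟩
  loopless := ⟨fun p h => h.1 rfl⟩

/-- The vertices of `Ĥ`: pairs `(i,j)` with `i ∈ Fin 3`, `j ∈ Fin 4`, excluding the
three "diagonal" pairs (which correspond to `(1,1), (2,2), (3,3)` in the 1-indexed
description). -/
abbrev HhatVert : Type := {p : Fin 3 × Fin 4 // (p.1 : ℕ) ≠ (p.2 : ℕ)}

/-- The graph `Ĥ`, i.e. `K₃ × K₄` with the three diagonal vertices deleted. -/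
def Hhat : SimpleGraph HhatVert where
  Adj p q := p.1.1 ≠ q.1.1 ∧ p.1.2 ≠ q.1.2
  symm := ⟨fun p q h => ⟨h.1.symm, h.2.symm⟩⟩
  loopless := ⟨fun p h => h.1 rfl⟩

/-- The proper 4-coloring `β̂` of `Ĥ` given by the second coordinate. -/
def betaHat : Hhat.Coloring (Fin 4) :=
  SimpleGraph.Coloring.mk (fun p => p.1.2) (fun h => h.2)

/-!
A Kempe swap of a coloring in which every two color classes span a connected Kempe chain acts
on the whole two classes at once, so it merely permutes the colors; being a permutation of such
a coloring is therefore preserved by Kempe swaps. For `β̂` any two color classes span a connected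
subgraph of `Ĥ` (a path on four vertices, or a connected graph on five), which gives the theorem.
-/

lemma Relation.EqvGen.iff_of_rel {α : Type*} {r : α → α → Prop} {P : α → Prop}
    (hr : ∀ a b, r a b → (P a ↔ P b)) {a b : α} (h : Relation.EqvGen r a b) : P a ↔ P b := by
  induction h with
  | rel a b hab => exact hr a b hab
  | refl => exact Iff.rfl
  | symm _ _ _ ih => exact ih.symm
  | trans _ _ _ _ _ ih₁ ih₂ => exact ih₁.trans ih₂

section KempeChains

variable {V : Type*} {G : SimpleGraph V} {k : ℕ}

instance [DecidableRel G.Adj] (φ : V → Fin k) (i j : Fin k) :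
    DecidableRel (kempeSubgraph G φ i j).Adj := fun u v =>
  inferInstanceAs (Decidable (G.Adj u v ∧ (φ u = i ∨ φ u = j) ∧ (φ v = i ∨ φ v = j)))

lemma kempeSubgraph_congr {φ ψ : V → Fin k} {i j : Fin k}
    (h : ∀ v, (φ v = i ∨ φ v = j) ↔ (ψ v = i ∨ ψ v = j)) :
    kempeSubgraph G φ i j = kempeSubgraph G ψ i j := by
  ext u v
  show G.Adj u v ∧ _ ∧ _ ↔ G.Adj u v ∧ _ ∧ _
  rw [h u, h v]

lemma kempeSubgraph_perm_comp (φ : V → Fin k) (σ : Equiv.Perm (Fin k)) (i j : Fin k) :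
    kempeSubgraph G (σ ∘ φ) i j = kempeSubgraph G φ (σ.symm i) (σ.symm j) := by
  ext u v
  simp only [kempeSubgraph, Function.comp_apply, ← Equiv.eq_symm_apply]

lemma eq_of_kempeSubgraph_reachable_of_uncolored {φ : V → Fin k} {i j : Fin k} {w v : V}
    (hw : ¬(φ w = i ∨ φ w = j)) (hr : (kempeSubgraph G φ i j).Reachable w v) : v = w := by
  obtain ⟨p⟩ := hr
  cases p with
  | nil => rfl
  | cons hadj _ => exact absurd hadj.2.1 hw

lemma IsKempeSwap.symm {φ ψ : G.Coloring (Fin k)} (hswap : IsKempeSwap G φ ψ) :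
    IsKempeSwap G ψ φ := by
  obtain ⟨i, j, w, h⟩ := hswap
  have hchains : kempeSubgraph G (fun x => ψ x) i j = kempeSubgraph G (fun x => φ x) i j := by
    refine kempeSubgraph_congr fun v => ?_
    by_cases hr : (kempeSubgraph G (fun x => φ x) i j).Reachable w v
    · rw [(h v).1 hr, Equiv.swap_apply_eq_iff, Equiv.swap_apply_eq_iff, Equiv.swap_apply_left,
        Equiv.swap_apply_right, or_comm]
    · rw [(h v).2 hr]
  refine ⟨i, j, w, fun v => ⟨fun hr => ?_, fun hr => ?_⟩⟩ <;> rw [hchains] at hr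
  · rw [(h v).1 hr, Equiv.swap_apply_self]
  · exact ((h v).2 hr).symm

def KempeChainsConnected (G : SimpleGraph V) (φ : V → Fin k) : Prop :=
  ∀ i j, i ≠ j → ∀ u v, (φ u = i ∨ φ u = j) → (φ v = i ∨ φ v = j) →
    (kempeSubgraph G φ i j).Reachable u v

lemma KempeChainsConnected.perm_comp {φ : V → Fin k} (hφ : KempeChainsConnected G φ)
    (σ : Equiv.Perm (Fin k)) : KempeChainsConnected G (σ ∘ φ) := by
  intro i j hij u v hu hv
  rw [kempeSubgraph_perm_comp]
  simp only [Function.comp_apply, ← Equiv.eq_symm_apply] at hu hv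
  exact hφ _ _ (σ.symm.injective.ne hij) u v hu hv

lemma IsKempeSwap.exists_perm_of_kempeChainsConnected {φ ψ : G.Coloring (Fin k)}
    (hswap : IsKempeSwap G φ ψ) (hφ : KempeChainsConnected G (fun x => φ x)) :
    ∃ τ : Equiv.Perm (Fin k), ∀ v, ψ v = τ (φ v) := by
  obtain ⟨i, j, w, h⟩ := hswap
  by_cases hw : φ w = i ∨ φ w = j
  · refine ⟨Equiv.swap i j, fun v => ?_⟩
    by_cases hr : (kempeSubgraph G (fun x => φ x) i j).Reachable w v
    · exact (h v).1 hr
    rw [(h v).2 hr]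
    rcases eq_or_ne i j with rfl | hij
    · rw [Equiv.swap_self, Equiv.refl_apply]
    have hv : ¬(φ v = i ∨ φ v = j) := fun hv => hr (hφ i j hij w v hw hv)
    rw [Equiv.swap_apply_of_ne_of_ne (by tauto) (by tauto)]
  · refine ⟨1, fun v => ?_⟩
    by_cases hr : (kempeSubgraph G (fun x => φ x) i j).Reachable w v
    · obtain rfl := eq_of_kempeSubgraph_reachable_of_uncolored hw hr
      rw [(h v).1 hr, Equiv.swap_apply_of_ne_of_ne (by tauto) (by tauto), Equiv.Perm.one_apply]
    · rw [(h v).2 hr, Equiv.Perm.one_apply]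

theorem KempeEquiv.exists_perm_of_kempeChainsConnected {φ ψ : G.Coloring (Fin k)}
    (hφ : KempeChainsConnected G (fun x => φ x)) (h : KempeEquiv G k φ ψ) :
    ∃ σ : Equiv.Perm (Fin k), ∀ v, ψ v = σ (φ v) := by
  have hstep : ∀ χ χ' : G.Coloring (Fin k), IsKempeSwap G χ χ' →
      (∃ σ : Equiv.Perm (Fin k), ∀ v, χ v = σ (φ v)) →
        ∃ σ : Equiv.Perm (Fin k), ∀ v, χ' v = σ (φ v) := by
    rintro χ χ' hswap ⟨σ, hσ⟩
    have hχ : (fun x => χ x) = σ ∘ fun x => φ x := funext hσ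
    obtain ⟨τ, hτ⟩ := hswap.exists_perm_of_kempeChainsConnected (hχ ▸ hφ.perm_comp σ)
    exact ⟨σ.trans τ, fun v => by rw [hτ, hσ, Equiv.trans_apply]⟩
  refine (h.iff_of_rel (P := fun χ => ∃ σ : Equiv.Perm (Fin k), ∀ v, χ v = σ (φ v))
    fun χ χ' hswap => ⟨hstep χ χ' hswap, hstep χ' χ hswap.symm⟩).mp ⟨1, fun _ => rfl⟩

end KempeChains

instance : DecidableRel Hhat.Adj := fun p q =>
  inferInstanceAs (Decidable (p.1.1 ≠ q.1.1 ∧ p.1.2 ≠ q.1.2))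

lemma betaHat_exists_kempe_center : ∀ i j : Fin 4, i ≠ j → ∃ c : HhatVert, ∀ v : HhatVert,
    (betaHat v = i ∨ betaHat v = j) →
      v = c ∨ (kempeSubgraph Hhat (fun x => betaHat x) i j).Adj v c ∨
        ∃ u, (kempeSubgraph Hhat (fun x => betaHat x) i j).Adj v u ∧
          (kempeSubgraph Hhat (fun x => betaHat x) i j).Adj u c := by
  decide

lemma betaHat_kempeChainsConnected : KempeChainsConnected Hhat (fun x => betaHat x) := by
  intro i j hij u v hu hv
  obtain ⟨c, hc⟩ := betaHat_exists_kempe_center i j hij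
  have hreach : ∀ x, (betaHat x = i ∨ betaHat x = j) →
      (kempeSubgraph Hhat (fun x => betaHat x) i j).Reachable x c := by
    intro x hx
    rcases hc x hx with rfl | hadj | ⟨y, hxy, hyc⟩
    · rfl
    · exact hadj.reachable
    · exact hxy.reachable.trans hyc.reachable
  exact (hreach u hu).trans (hreach v hv).symm

/-- Every 4-coloring of `Ĥ` that is Kempe 4-equivalent to `β̂` has the same color
classes as `β̂` up to a permutation of the colors. -/
theorem stmt8 (ψ : Hhat.Coloring (Fin 4)) (h : KempeEquiv Hhat 4 betaHat ψ) :
    ∃ σ : Equiv.Perm (Fin 4), ∀ v : HhatVert, ψ v = σ (betaHat v) :=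
  h.exists_perm_of_kempeChainsConnected betaHat_kempeChainsConnected
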